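/- arXiv:1011.5001 — 3 statements merged into one kernel-verified Lean document; each statement's English description precedes it below -/
import Mathlib

section
/- Let n ≥ 1, let π1 be a set partition of {1,…,2n} all of whose blocks are invariant under f1, and let π2 be a set partition of {1,…,2n} all of whose blocks are invariant under f2. Let W be a block of π1 and let B1, B2 be blocks of π2. Let m1 be the maximum hat (even) element of B1 and suppose m1 ≠ 2n and m1 ∈ W; let w be the maximum non-hat (odd) element of W and suppose f2(w) ∈ B2. Then m1 < m2, where m2 is the maximum hat element of B2. (In the tree construction: if the black vertex B1 is a descendant of the white vertex W and the black vertex B2 is the ascendant of W, then the maximum label of B1 is strictly smaller than that of B2.) -/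
/-- The pairing `f₁ = (1 n̂)(2 1̂)(3 2̂)⋯(n n−1̂)` on `{1,…,2n}` (non-hat `i` encoded
as `2i−1`, hat `î` as `2i`). -/
def f1 (n : ℕ) : ℕ → ℕ := fun x =>
  if x = 2 * n then 1
  else if x = 1 then 2 * n
  else if x % 2 = 0 then x + 1 else x - 1

/-- The pairing `f₂ = (1 1̂)(2 2̂)⋯(n n̂)`: swaps `2i−1` and `2i`. -/
def f2 : ℕ → ℕ := fun x => if x % 2 = 0 then x - 1 else x + 1

/-- A set partition of `{1,…,2n}`. -/
def IsSetPartition (n : ℕ) (π : Finset (Finset ℕ)) : Prop :=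
  (∀ B ∈ π, B.Nonempty) ∧ (∀ B ∈ π, B ⊆ Finset.Icc 1 (2 * n)) ∧
  ∀ x ∈ Finset.Icc 1 (2 * n), ∃! B, B ∈ π ∧ x ∈ B

/-- If the black vertex `B1` is a descendant of the white vertex `W` (the maximum
hat element `m1` of `B1` lies in `W`, `m1 ≠ 2n`) and the black vertex `B2` is the
ascendant of `W` (`f2` of the maximum non-hat element of `W` lies in `B2`), then
`m1 < m2` where `m2` is the maximum hat element of `B2`. -/
theorem maxHat_lt_of_descendant (n : ℕ) (hn : 1 ≤ n)
    (π1 π2 : Finset (Finset ℕ))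
    (hπ1 : IsSetPartition n π1) (hs1 : ∀ B ∈ π1, ∀ x ∈ B, f1 n x ∈ B)
    (hπ2 : IsSetPartition n π2) (hs2 : ∀ B ∈ π2, ∀ x ∈ B, f2 x ∈ B)
    (W : Finset ℕ) (hW : W ∈ π1)
    (B1 B2 : Finset ℕ) (hB1 : B1 ∈ π2) (hB2 : B2 ∈ π2)
    (m1 : ℕ) (hm1B : m1 ∈ B1) (hm1even : m1 % 2 = 0)
    (hm1max : ∀ x ∈ B1, x % 2 = 0 → x ≤ m1)
    (hm1ne : m1 ≠ 2 * n) (hm1W : m1 ∈ W)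
    (w : ℕ) (hwW : w ∈ W) (hwodd : w % 2 = 1)
    (hwmax : ∀ x ∈ W, x % 2 = 1 → x ≤ w)
    (hwB2 : f2 w ∈ B2)
    (m2 : ℕ) (hm2B : m2 ∈ B2) (hm2even : m2 % 2 = 0)
    (hm2max : ∀ x ∈ B2, x % 2 = 0 → x ≤ m2) :
    m1 < m2 := by
  have hm1ne1 : m1 ≠ 1 := by omega
  have hf1 : f1 n m1 = m1 + 1 := by
    simp [f1, hm1ne, hm1ne1, hm1even]
  have h1 : m1 + 1 ∈ W := hf1 ▸ hs1 W hW m1 hm1W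
  have h2 : m1 + 1 ≤ w := hwmax _ h1 (by omega)
  have hf2 : f2 w = w + 1 := by
    simp [f2, hwodd]
  have h3 : w + 1 ∈ B2 := hf2 ▸ hwB2
  have h4 : w + 1 ≤ m2 := hm2max _ h3 (by omega)
  omega
end

section
/- Let n ≥ 1, let π1 be a set partition of {1,…,2n} all of whose blocks are invariant under f1, and let π2 be a set partition of {1,…,2n} all of whose blocks are invariant under f2. Let B be a block of π2 and let W1, W2 be blocks of π1. Let m be the maximum hat (even) element of B and suppose m ≠ 2n and m ∈ W2, and suppose the maximum non-hat (odd) element w1 of W1 satisfies f2(w1) ∈ B. Then w1 < w2, where w2 is the maximum non-hat element of W2. (In the tree construction: if the white vertex W1 is a descendant of the black vertex B and the white vertex W2 is the ascendant of B, then the maximum non-hat label of W1 is strictly smaller than that of W2.) -/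
/-- If the white vertex `W1` is a descendant of the black vertex `B` (`f2` of the
maximum non-hat element `w1` of `W1` lies in `B`) and the white vertex `W2` is the
ascendant of `B` (the maximum hat element `m` of `B` satisfies `m ≠ 2n` and
`m ∈ W2`), then `w1 < w2` where `w2` is the maximum non-hat element of `W2`. -/
theorem maxNonHat_lt_of_descendant (n : ℕ) (hn : 1 ≤ n)
    (π1 π2 : Finset (Finset ℕ))
    (hπ1 : IsSetPartition n π1) (hs1 : ∀ B ∈ π1, ∀ x ∈ B, f1 n x ∈ B)
    (hπ2 : IsSetPartition n π2) (hs2 : ∀ B ∈ π2, ∀ x ∈ B, f2 x ∈ B)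
    (B : Finset ℕ) (hB : B ∈ π2)
    (W1 W2 : Finset ℕ) (hW1 : W1 ∈ π1) (hW2 : W2 ∈ π1)
    (m : ℕ) (hmB : m ∈ B) (hmeven : m % 2 = 0)
    (hmmax : ∀ x ∈ B, x % 2 = 0 → x ≤ m)
    (hmne : m ≠ 2 * n) (hmW2 : m ∈ W2)
    (w1 : ℕ) (hw1W : w1 ∈ W1) (hw1odd : w1 % 2 = 1)
    (hw1max : ∀ x ∈ W1, x % 2 = 1 → x ≤ w1)
    (hw1B : f2 w1 ∈ B)
    (w2 : ℕ) (hw2W : w2 ∈ W2) (hw2odd : w2 % 2 = 1)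
    (hw2max : ∀ x ∈ W2, x % 2 = 1 → x ≤ w2) :
    w1 < w2 := by
  have hm1 : 1 ≤ m := (Finset.mem_Icc.mp (hπ2.2.1 B hB hmB)).1
  have hf2w1 : f2 w1 = w1 + 1 := by unfold f2; rw [if_neg (by omega)]
  have h1 : w1 + 1 ≤ m := hmmax _ (hf2w1 ▸ hw1B) (by omega)
  have hf1m : f1 n m = m + 1 := by
    unfold f1; rw [if_neg hmne, if_neg (by omega), if_pos hmeven]
  have h2 : m + 1 ∈ W2 := hf1m ▸ hs1 W2 hW2 m hmW2
  have h3 : m + 1 ≤ w2 := hw2max _ h2 (by omega)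
  omega
end

section
/- Let n ≥ 1, let π1 be a set partition of {1,…,2n} all of whose blocks are invariant under f1, and let π2 be a set partition of {1,…,2n} all of whose blocks are invariant under f2. Let W0 be the block of π1 containing 1. Define a parent function on the disjoint union of the blocks of π1 other than W0 and the blocks of π2: for a block B of π2, parent(B) is the block of π1 containing the maximum hat (even) element of B; for a block W ≠ W0 of π1, parent(W) is the block of π2 containing the maximum non-hat (odd) element of W. Then this ascendant/descendant structure is a tree rooted at W0: for every block v of π1 or π2 there exists k ≥ 0 such that the k-fold iterate of the parent function applied to v equals W0. -/
/-- The maximum non-hat (odd) element of `B`. -/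
def maxOdd (B : Finset ℕ) : ℕ := (B.filter fun x => x % 2 = 1).sup id

/-- The maximum hat (even) element of `B`. -/
def maxEven (B : Finset ℕ) : ℕ := (B.filter fun x => x % 2 = 0).sup id

/-- The ascendant (parent) relation on blocks: `parentRel π1 π2 W0 v w` holds iff
`w` is the parent of `v`, i.e. either `v` is a block of `π2` and `w` is the block
of `π1` containing the maximum hat element of `v`, or `v` is a block of `π1` other
than the block `W0` containing `1` and `w` is the block of `π2` containing the
maximum non-hat element of `v`. -/
def parentRel (π1 π2 : Finset (Finset ℕ)) (W0 : Finset ℕ) :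
    Finset ℕ → Finset ℕ → Prop := fun v w =>
  (v ∈ π2 ∧ w ∈ π1 ∧ maxEven v ∈ w) ∨
  (v ∈ π1 ∧ v ≠ W0 ∧ w ∈ π2 ∧ maxOdd v ∈ w)

lemma part_unique {n : ℕ} {π : Finset (Finset ℕ)} (h : IsSetPartition n π)
    {B C : Finset ℕ} {x : ℕ} (hB : B ∈ π) (hC : C ∈ π) (hxB : x ∈ B) (hxC : x ∈ C) :
    B = C := by
  obtain ⟨-, hsub, hu⟩ := h
  obtain ⟨D, -, hun⟩ := hu x (hsub B hB hxB)
  exact (hun B ⟨hB, hxB⟩).trans (hun C ⟨hC, hxC⟩).symm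

lemma sup_id_mem {B : Finset ℕ} (h : B.Nonempty) : B.sup id ∈ B := by
  have : B.sup id = B.max' h := by rw [Finset.max'_eq_sup', Finset.sup'_eq_sup]
  rw [this]; exact B.max'_mem h

lemma pi2_block {n : ℕ} {π2 : Finset (Finset ℕ)} (hπ2 : IsSetPartition n π2)
    (hs2 : ∀ B ∈ π2, ∀ x ∈ B, f2 x ∈ B) {B : Finset ℕ} (hB : B ∈ π2) :
    maxEven B = B.sup id ∧ (B.sup id) % 2 = 0 ∧ B.sup id ∈ B ∧
      2 ≤ B.sup id ∧ B.sup id ≤ 2 * n := by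
  have hmem : B.sup id ∈ B := sup_id_mem (hπ2.1 B hB)
  have hIcc := Finset.mem_Icc.1 (hπ2.2.1 B hB hmem)
  have heven : (B.sup id) % 2 = 0 := by
    by_contra h
    have h1 : f2 (B.sup id) ∈ B := hs2 B hB _ hmem
    rw [f2, if_neg h] at h1
    have := Finset.le_sup (f := id) h1
    simp only [id] at this; omega
  refine ⟨le_antisymm (Finset.sup_le fun x hx =>
      Finset.le_sup (f := id) (Finset.mem_filter.1 hx).1)
      (Finset.le_sup (f := id) (Finset.mem_filter.2 ⟨hmem, heven⟩)),
    heven, hmem, by omega, hIcc.2⟩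

lemma pi1_block {n : ℕ} {π1 : Finset (Finset ℕ)} (hπ1 : IsSetPartition n π1)
    (hs1 : ∀ B ∈ π1, ∀ x ∈ B, f1 n x ∈ B) {W0 : Finset ℕ} (hW0 : W0 ∈ π1)
    (h1W0 : 1 ∈ W0) {W : Finset ℕ} (hW : W ∈ π1) (hne0 : W ≠ W0) :
    maxOdd W = W.sup id ∧ (W.sup id) % 2 = 1 ∧ W.sup id ∈ W ∧
      1 ≤ W.sup id ∧ W.sup id < 2 * n := by
  have hmem : W.sup id ∈ W := sup_id_mem (hπ1.1 W hW)
  have hIcc := Finset.mem_Icc.1 (hπ1.2.1 W hW hmem)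
  have h2n : (2 * n : ℕ) ∉ W := by
    intro h
    have h1 : f1 n (2 * n) ∈ W := hs1 W hW _ h
    simp only [f1, if_pos rfl] at h1
    exact hne0 (part_unique hπ1 hW hW0 h1 h1W0)
  have h1W : (1 : ℕ) ∉ W := fun h => hne0 (part_unique hπ1 hW hW0 h h1W0)
  have hne2n : W.sup id ≠ 2 * n := fun e => h2n (e ▸ hmem)
  have hne1 : W.sup id ≠ 1 := fun e => h1W (e ▸ hmem)
  have hodd : (W.sup id) % 2 = 1 := by
    by_contra h
    have h0 : (W.sup id) % 2 = 0 := by omega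
    have h1 : f1 n (W.sup id) ∈ W := hs1 W hW _ hmem
    rw [f1, if_neg hne2n, if_neg hne1, if_pos h0] at h1
    have := Finset.le_sup (f := id) h1
    simp only [id] at this; omega
  refine ⟨le_antisymm (Finset.sup_le fun x hx =>
      Finset.le_sup (f := id) (Finset.mem_filter.1 hx).1)
      (Finset.le_sup (f := id) (Finset.mem_filter.2 ⟨hmem, hodd⟩)),
    hodd, hmem, hIcc.1, by omega⟩

/-- **The ascendant/descendant structure is a tree rooted at the block of `π1`
containing `1`**: every block of `π1` or `π2` reaches `W0` by finitely many
iterations of the parent function. -/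
theorem parentRel_reaches_root (n : ℕ) (hn : 1 ≤ n)
    (π1 π2 : Finset (Finset ℕ))
    (hπ1 : IsSetPartition n π1) (hs1 : ∀ B ∈ π1, ∀ x ∈ B, f1 n x ∈ B)
    (hπ2 : IsSetPartition n π2) (hs2 : ∀ B ∈ π2, ∀ x ∈ B, f2 x ∈ B)
    (W0 : Finset ℕ) (hW0 : W0 ∈ π1) (h1W0 : 1 ∈ W0)
    (v : Finset ℕ) (hv : v ∈ π1 ∨ v ∈ π2) :
    Relation.ReflTransGen (parentRel π1 π2 W0) v W0 := by
  have key : ∀ k, ∀ v : Finset ℕ, (v ∈ π2 ∨ (v ∈ π1 ∧ v ≠ W0)) →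
      2 * n - v.sup id ≤ k → Relation.ReflTransGen (parentRel π1 π2 W0) v W0 := by
    intro k
    induction k with
    | zero =>
      intro v hvv hk
      rcases hvv with hv2 | ⟨hv1, hvne⟩
      · obtain ⟨hmE, heven, hmem, hge2, hle⟩ := pi2_block hπ2 hs2 hv2
        have hsup : v.sup id = 2 * n := by omega
        have hIcc : v.sup id ∈ Finset.Icc 1 (2 * n) := Finset.mem_Icc.2 (by omega)
        obtain ⟨W, ⟨hWπ, hWmem⟩, -⟩ := hπ1.2.2 _ hIcc
        have h1 : f1 n (v.sup id) ∈ W := hs1 W hWπ _ hWmem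
        rw [f1, if_pos hsup] at h1
        have hWeq : W = W0 := part_unique hπ1 hWπ hW0 h1 h1W0
        subst hWeq
        exact Relation.ReflTransGen.single (Or.inl ⟨hv2, hW0, by rw [hmE]; exact hWmem⟩)
      · obtain ⟨-, -, -, -, hlt⟩ := pi1_block hπ1 hs1 hW0 h1W0 hv1 hvne
        omega
    | succ k ih =>
      intro v hvv hk
      rcases hvv with hv2 | ⟨hv1, hvne⟩
      · obtain ⟨hmE, heven, hmem, hge2, hle⟩ := pi2_block hπ2 hs2 hv2
        have hIcc : v.sup id ∈ Finset.Icc 1 (2 * n) := Finset.mem_Icc.2 (by omega)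
        obtain ⟨W, ⟨hWπ, hWmem⟩, -⟩ := hπ1.2.2 _ hIcc
        have hstep : parentRel π1 π2 W0 v W :=
          Or.inl ⟨hv2, hWπ, by rw [hmE]; exact hWmem⟩
        by_cases hE : v.sup id = 2 * n
        · have h1 : f1 n (v.sup id) ∈ W := hs1 W hWπ _ hWmem
          rw [f1, if_pos hE] at h1
          have hWeq : W = W0 := part_unique hπ1 hWπ hW0 h1 h1W0
          exact Relation.ReflTransGen.single (hWeq ▸ hstep)
        · by_cases hW0eq : W = W0
          · exact Relation.ReflTransGen.single (hW0eq ▸ hstep)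
          · have hne1 : v.sup id ≠ 1 := by omega
            have hplus : v.sup id + 1 ∈ W := by
              have h1 := hs1 W hWπ _ hWmem
              rwa [f1, if_neg hE, if_neg hne1, if_pos heven] at h1
            have hsupW : v.sup id + 1 ≤ W.sup id := Finset.le_sup (f := id) hplus
            exact Relation.ReflTransGen.head hstep
              (ih W (Or.inr ⟨hWπ, hW0eq⟩) (by omega))
      · obtain ⟨hmO, hodd, hmem, hge1, hlt⟩ := pi1_block hπ1 hs1 hW0 h1W0 hv1 hvne
        have hIcc : v.sup id ∈ Finset.Icc 1 (2 * n) := Finset.mem_Icc.2 (by omega)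
        obtain ⟨B, ⟨hBπ, hBmem⟩, -⟩ := hπ2.2.2 _ hIcc
        have hstep : parentRel π1 π2 W0 v B :=
          Or.inr ⟨hv1, hvne, hBπ, by rw [hmO]; exact hBmem⟩
        have hplus : v.sup id + 1 ∈ B := by
          have h1 := hs2 B hBπ _ hBmem
          rwa [f2, if_neg (by omega : ¬ (v.sup id) % 2 = 0)] at h1
        have hsupB : v.sup id + 1 ≤ B.sup id := Finset.le_sup (f := id) hplus
        exact Relation.ReflTransGen.head hstep (ih B (Or.inl hBπ) (by omega))
  rcases hv with hv1 | hv2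
  · by_cases h : v = W0
    · subst h; exact Relation.ReflTransGen.refl
    · exact key _ v (Or.inr ⟨hv1, h⟩) le_rfl
  · exact key _ v (Or.inl hv2) le_rfl
end
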